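/- Let $\Omega$ be a commutative semigroup, $(Z, \ast_{\alpha,\beta})_{\alpha,\beta\in\Omega}$ an $\Omega$-zinbiel algebra, and $p_\alpha, q_\alpha: Z\to Z$ two commuting families of $\Omega$-zinbiel algebra morphisms. Define $x\circledast_{\alpha,\beta}y := p_\alpha(x)\ast_{\alpha,\beta}q_\beta(y)$. Then $(Z, \circledast_{\alpha,\beta}, p_\alpha, q_\alpha)_{\alpha,\beta\in\Omega}$ is a BiHom-$\Omega$-zinbiel algebra, i.e., $p_\alpha q_\alpha(x)\circledast_{\alpha,\beta\gamma}(p_\beta(y)\circledast_{\beta,\gamma}z) = (q_\alpha(x)\circledast_{\alpha,\beta}p_\beta(y))\circledast_{\alpha\beta,\gamma}q_\gamma(z) + (q_\beta(y)\circledast_{\beta,\alpha}p_\alpha(x))\circledast_{\beta\alpha,\gamma}q_\gamma(z)$ for all $x, y, z \in Z$ and $\alpha,\beta,\gamma\in\Omega$. -/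

import Mathlib

/-! The twisted product is `x ⊛ y = p x ∗ q y`. Since `p` and `q` are commuting morphisms of `∗`,
every occurrence of `p` and `q` on either side of the BiHom identity can be pushed down to the
three arguments, where both sides become the Ω-zinbiel identity for `p p q x`, `q p p y` and
`q q z`. -/

section YauTwist

variable {Ω Z : Type*} [Mul Ω] (ast : Ω → Ω → Z → Z → Z) (p q : Ω → Z → Z)

def yauTwist (α β : Ω) (x y : Z) : Z := ast α β (p α x) (q β y)

variable {ast p q}

theorem yauTwist_map {f : Ω → Z → Z}
    (hf : ∀ α β x y, f (α * β) (ast α β x y) = ast α β (f α x) (f β y))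
    (hfp : ∀ α x, f α (p α x) = p α (f α x)) (hfq : ∀ α x, f α (q α x) = q α (f α x))
    (α β : Ω) (x y : Z) :
    f (α * β) (yauTwist ast p q α β x y) = yauTwist ast p q α β (f α x) (f β y) := by
  simp only [yauTwist, hf, hfp, hfq]

theorem yauTwist_biHomZinbiel [Add Z]
    (hzin : ∀ α β γ x y z,
      ast α (β * γ) x (ast β γ y z) = ast (α * β) γ (ast α β x y) z + ast (β * α) γ (ast β α y x) z)
    (hp : ∀ α β x y, p (α * β) (ast α β x y) = ast α β (p α x) (p β y))
    (hq : ∀ α β x y, q (α * β) (ast α β x y) = ast α β (q α x) (q β y))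
    (hpq : ∀ α x, p α (q α x) = q α (p α x)) (α β γ : Ω) (x y z : Z) :
    yauTwist ast p q α (β * γ) (p α (q α x)) (yauTwist ast p q β γ (p β y) z)
      = yauTwist ast p q (α * β) γ (yauTwist ast p q α β (q α x) (p β y)) (q γ z)
        + yauTwist ast p q (β * α) γ (yauTwist ast p q β α (q β y) (p α x)) (q γ z) := by
  simp only [yauTwist, hp, hq, hpq]
  exact hzin α β γ _ _ _

end YauTwist

/-- Yau twist of an Ω-zinbiel algebra gives a BiHom-Ω-zinbiel algebra. -/
theorem stmt_19
    {K : Type*} [Field K] {Ω : Type*} [CommSemigroup Ω]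
    {Z : Type*} [AddCommGroup Z] [Module K Z]
    (ast : Ω → Ω → Z →ₗ[K] Z →ₗ[K] Z)
    (p q : Ω → Z →ₗ[K] Z)
    -- Ω-zinbiel identity
    (hzin : ∀ (α β γ : Ω) (x y z : Z),
      ast α (β * γ) x (ast β γ y z)
        = ast (α * β) γ (ast α β x y) z + ast (β * α) γ (ast β α y x) z)
    -- p, q are Ω-zinbiel algebra morphisms
    (hp : ∀ (α β : Ω) (x y : Z), p (α * β) (ast α β x y) = ast α β (p α x) (p β y))
    (hq : ∀ (α β : Ω) (x y : Z), q (α * β) (ast α β x y) = ast α β (q α x) (q β y))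
    -- the families commute
    (hpq : ∀ (α : Ω) (x : Z), p α (q α x) = q α (p α x))
    -- the twisted operation
    (cast : Ω → Ω → Z → Z → Z)
    (hcast : ∀ (α β : Ω) (x y : Z), cast α β x y = ast α β (p α x) (q β y)) :
    -- (Z, cast, p, q) is a BiHom-Ω-zinbiel algebra
    (∀ (α β : Ω) (x y : Z), p (α * β) (cast α β x y) = cast α β (p α x) (p β y)) ∧
    (∀ (α β : Ω) (x y : Z), q (α * β) (cast α β x y) = cast α β (q α x) (q β y)) ∧
    (∀ (α β γ : Ω) (x y z : Z),
      cast α (β * γ) (p α (q α x)) (cast β γ (p β y) z)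
        = cast (α * β) γ (cast α β (q α x) (p β y)) (q γ z)
          + cast (β * α) γ (cast β α (q β y) (p α x)) (q γ z)) := by
  obtain rfl : cast = yauTwist (fun α β x y => ast α β x y) (fun α x => p α x) (fun α x => q α x) :=
    funext fun α => funext fun β => funext fun x => funext fun y => hcast α β x y
  exact ⟨yauTwist_map hp (fun _ _ => rfl) hpq, yauTwist_map hq (fun α x => (hpq α x).symm)
    (fun _ _ => rfl), yauTwist_biHomZinbiel hzin hp hq hpq⟩
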